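/- arXiv:1411.7705 — 2 statements merged into one kernel-verified Lean document; each statement's English description precedes it below -/
import Mathlib

section
/- Quadratic estimate for the adjoint: Under the same hypotheses as the previous statement (P bounded with -Im P ≥ γ ≥ 0, z with Im z > 0, P - z boundedly invertible), for every φ ∈ H one has ⟨γ(P*-z̄)⁻¹φ, (P*-z̄)⁻¹φ⟩ ≤ |⟨(P*-z̄)⁻¹ φ, φ⟩|. -/
open ComplexConjugate

/-- Quadratic estimate for the adjoint: if `P` is bounded with `-Im P ≥ γ ≥ 0`,
`Im z > 0`, and `P* - z̄` is boundedly invertible with inverse `R'`, then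
`⟨γ R'φ, R'φ⟩ ≤ |⟨R'φ, φ⟩|` for all `φ`. -/
theorem stmt_4 {H : Type*} [NormedAddCommGroup H] [InnerProductSpace ℂ H] [CompleteSpace H]
    (P γ R' : H →L[ℂ] H) (hγsa : IsSelfAdjoint γ)
    (hγpos : ∀ φ : H, 0 ≤ (inner ℂ φ (γ φ) : ℂ).re)
    (hdiss : ∀ φ : H, (inner ℂ φ (γ φ) : ℂ).re ≤ -(inner ℂ φ (P φ) : ℂ).im)
    (z : ℂ) (hz : 0 < z.im)
    (hR1 : (ContinuousLinearMap.adjoint P - conj z • 1) * R' = 1)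
    (hR2 : R' * (ContinuousLinearMap.adjoint P - conj z • 1) = 1) (φ : H) :
    (inner ℂ (R' φ) (γ (R' φ)) : ℂ).re ≤ ‖(inner ℂ φ (R' φ) : ℂ)‖ := by
  set ψ := R' φ with hψ
  have hφ : φ = ContinuousLinearMap.adjoint P ψ - conj z • ψ := by
    have := congrArg (fun T : H →L[ℂ] H => T φ) hR1
    simpa [ContinuousLinearMap.sub_apply, ContinuousLinearMap.smul_apply] using this.symm
  have hinner : (inner ℂ φ ψ : ℂ) = inner ℂ ψ (P ψ) - z * (‖ψ‖ : ℂ) ^ 2 := by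
    rw [hφ, inner_sub_left, inner_smul_left, ContinuousLinearMap.adjoint_inner_left,
      inner_self_eq_norm_sq_to_K]
    ring_nf
    simp [Complex.conj_conj]
  have him : (inner ℂ φ ψ : ℂ).im = (inner ℂ ψ (P ψ) : ℂ).im - z.im * ‖ψ‖ ^ 2 := by
    rw [hinner]
    simp [Complex.sub_im, Complex.mul_im, ← Complex.ofReal_pow]
  have key : (inner ℂ ψ (γ ψ) : ℂ).re ≤ -(inner ℂ φ ψ : ℂ).im := by
    have h1 := hdiss ψ
    have h2 : 0 ≤ z.im * ‖ψ‖ ^ 2 := mul_nonneg hz.le (by positivity)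
    rw [him]; linarith
  calc (inner ℂ ψ (γ ψ) : ℂ).re ≤ -(inner ℂ φ ψ : ℂ).im := key
    _ ≤ |(inner ℂ φ ψ : ℂ).im| := neg_le_abs _
    _ ≤ ‖(inner ℂ φ ψ : ℂ)‖ := Complex.abs_im_le_norm _
end

section
/- Differential-inequality boundedness lemma: Let X be a Banach space, ε₀ ∈ (0,1], and f ∈ C¹((0,ε₀], X). Suppose there exist γ₁ ∈ [0,1], γ₂ ∈ [0,1), γ₃ ∈ ℝ and c₁, c₂ > 0 such that for all ε ∈ (0,ε₀): ‖f'(ε)‖ ≤ c₁ ε^{-γ₂}(1 + ‖f(ε)‖^{γ₁}) and ‖f(ε)‖ ≤ c₂ ε^{-γ₃}. Then f has a limit at 0 and there exists c ≥ 0, depending only on ε₀, γ₁, γ₂, γ₃, c₁, c₂, such that ‖f(ε)‖ ≤ c for all ε ∈ (0,ε₀). -/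
/-!
Bootstrap. Away from `0` the bound `‖f ε‖ ≤ c₂ ε^{-γ₃}` gives a constant `M`. If
`‖f‖ ≤ K ε^{-a}` on `(0, ε₀)`, the differential inequality gives
`‖f'‖ ≤ 2 c₁ K ε^{-(γ₂ + γ₁ a)}`, and comparing `f` with a power function between `ε` and a
fixed `r` (mean value inequality) improves the exponent to `max (a - δ) δ`, where
`γ₂ + 2δ ≤ 1`, at the price of a fixed factor in `K`. After `⌈γ₃ / δ⌉` steps the exponent is
`δ`; then `‖f'‖ ≤ C ε^{δ - 1}` is integrable at `0` and one more comparison bounds `f`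
uniformly. Once `f` is bounded, `‖f'‖ ≤ C ε^{-γ₂}` with `γ₂ < 1`, so `f` is Cauchy at `0⁺`.
-/

open Set Filter Topology

section MeanValue

variable {E : Type*} [NormedAddCommGroup E] [NormedSpace ℝ E] {f f' : ℝ → E} {a b : ℝ}

theorem norm_sub_le_of_norm_deriv_le_deriv {G g : ℝ → ℝ} (hab : a ≤ b)
    (hf : ∀ t ∈ Icc a b, HasDerivAt f (f' t) t) (hG : ∀ t ∈ Icc a b, HasDerivAt G (g t) t)
    (hbound : ∀ t ∈ Ico a b, ‖f' t‖ ≤ g t) : ‖f b - f a‖ ≤ G b - G a :=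
  image_norm_le_of_norm_deriv_right_le_deriv_boundary' (f := fun t => f t - f a)
    (fun t ht => ((hf t ht).continuousAt.sub continuousAt_const).continuousWithinAt)
    (fun t ht => ((hf t (Ico_subset_Icc_self ht)).sub_const (f a)).hasDerivWithinAt)
    (by simp) (fun t ht => ((hG t ht).continuousAt.sub continuousAt_const).continuousWithinAt)
    (fun t ht => ((hG t (Ico_subset_Icc_self ht)).sub_const (G a)).hasDerivWithinAt)
    hbound (right_mem_Icc.2 hab)

theorem norm_sub_le_of_norm_deriv_le_rpow {s D : ℝ} (ha : 0 < a) (hab : a ≤ b) (hs : s ≠ 0)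
    (hf : ∀ t ∈ Icc a b, HasDerivAt f (f' t) t)
    (hbound : ∀ t ∈ Ico a b, ‖f' t‖ ≤ D * t ^ (s - 1)) :
    ‖f b - f a‖ ≤ D * (b ^ s - a ^ s) / s := by
  have hG : ∀ t ∈ Icc a b, HasDerivAt (fun t => D * t ^ s / s) (D * t ^ (s - 1)) t := by
    intro t ht
    refine (((Real.hasDerivAt_rpow_const (p := s) (Or.inl (ha.trans_le ht.1).ne')).const_mul
      D).div_const s).congr_deriv ?_
    field_simp
  calc ‖f b - f a‖ ≤ D * b ^ s / s - D * a ^ s / s :=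
        norm_sub_le_of_norm_deriv_le_deriv hab hf hG hbound
    _ = D * (b ^ s - a ^ s) / s := by ring

end MeanValue

theorem exists_tendsto_of_dist_le_add {α E : Type*} [PseudoMetricSpace E] [CompleteSpace E]
    {l : Filter α} [l.NeBot] {f : α → E} {φ : α → ℝ} (hφ : Tendsto φ l (𝓝 0))
    (hf : ∀ᶠ p in l ×ˢ l, dist (f p.1) (f p.2) ≤ φ p.1 + φ p.2) :
    ∃ L, Tendsto f l (𝓝 L) := by
  refine cauchy_map_iff_exists_tendsto.1 (cauchy_map_iff.2 ⟨inferInstance, ?_⟩)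
  refine Metric.uniformity_basis_dist.tendsto_right_iff.2 fun η hη => ?_
  have hsmall : ∀ᶠ x in l, φ x < η / 2 := hφ.eventually (gt_mem_nhds (half_pos hη))
  filter_upwards [hf, hsmall.prod_mk hsmall] with p hp hsmall'
  linarith [hsmall'.1, hsmall'.2]

theorem one_add_rpow_le_two_mul_rpow {x K a γ t : ℝ} (hx : 0 ≤ x) (hxK : x ≤ K * t ^ (-a))
    (hK : 1 ≤ K) (ha : 0 ≤ a) (hγ : γ ∈ Icc 0 1) (ht₀ : 0 < t) (ht₁ : t ≤ 1) :
    1 + x ^ γ ≤ 2 * K * t ^ (-(γ * a)) := by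
  have hT : 1 ≤ t ^ (-(γ * a)) :=
    Real.one_le_rpow_of_pos_of_le_one_of_nonpos ht₀ ht₁ (by nlinarith [hγ.1])
  have hxγ : x ^ γ ≤ K * t ^ (-(γ * a)) :=
    calc x ^ γ ≤ (K * t ^ (-a)) ^ γ := Real.rpow_le_rpow hx hxK hγ.1
      _ = K ^ γ * t ^ (-(γ * a)) := by
        rw [Real.mul_rpow (by linarith) (by positivity), ← Real.rpow_mul ht₀.le]
        ring_nf
      _ ≤ K * t ^ (-(γ * a)) := by gcongr; exact Real.rpow_le_self_of_one_le hK hγ.2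
  nlinarith

theorem rpow_neg_le_rpow_neg_abs_of_le {r t γ : ℝ} (hr : 0 < r) (hrt : r ≤ t) (ht : t ≤ 1) :
    t ^ (-γ) ≤ r ^ (-|γ|) :=
  calc t ^ (-γ) ≤ t ^ (-|γ|) :=
        Real.rpow_le_rpow_of_exponent_ge (hr.trans_le hrt) ht (neg_le_neg (le_abs_self γ))
    _ ≤ r ^ (-|γ|) := Real.rpow_le_rpow_of_nonpos hr hrt (neg_nonpos.2 (abs_nonneg γ))

section DifferentialInequality

variable {X : Type*} [NormedAddCommGroup X] [NormedSpace ℝ X] {f f' : ℝ → X}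
  {ε₀ γ₁ γ₂ c₁ : ℝ}

theorem norm_sub_le_of_norm_le_mul_rpow (hε₀ : ε₀ ≤ 1) (hγ₁ : γ₁ ∈ Icc 0 1) (hc₁ : 0 ≤ c₁)
    (hf : ∀ ε ∈ Ioc 0 ε₀, HasDerivAt f (f' ε) ε)
    (hf' : ∀ ε ∈ Ioo 0 ε₀, ‖f' ε‖ ≤ c₁ * ε ^ (-γ₂) * (1 + ‖f ε‖ ^ γ₁))
    {K a s x y : ℝ} (hK : 1 ≤ K) (ha : 0 ≤ a) (hfK : ∀ t ∈ Ioo 0 ε₀, ‖f t‖ ≤ K * t ^ (-a))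
    (hs : s ≠ 0) (hsa : s + γ₂ + γ₁ * a ≤ 1) (hx : 0 < x) (hxy : x ≤ y) (hy : y < ε₀) :
    ‖f y - f x‖ ≤ 2 * c₁ * K * (y ^ s - x ^ s) / s := by
  refine norm_sub_le_of_norm_deriv_le_rpow hx hxy hs
    (fun t ht => hf t ⟨hx.trans_le ht.1, ht.2.trans hy.le⟩) fun t ht => ?_
  have ht₀ : 0 < t := hx.trans_le ht.1
  have ht : t ∈ Ioo 0 ε₀ := ⟨ht₀, ht.2.trans hy⟩
  calc ‖f' t‖ ≤ c₁ * t ^ (-γ₂) * (1 + ‖f t‖ ^ γ₁) := hf' t ht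
    _ ≤ c₁ * t ^ (-γ₂) * (2 * K * t ^ (-(γ₁ * a))) := by
        gcongr
        exact one_add_rpow_le_two_mul_rpow (norm_nonneg _) (hfK t ht) hK ha hγ₁ ht₀
          (ht.2.le.trans hε₀)
    _ = 2 * c₁ * K * t ^ (-(γ₂ + γ₁ * a)) := by rw [neg_add, Real.rpow_add ht₀]; ring
    _ ≤ 2 * c₁ * K * t ^ (s - 1) := mul_le_mul_of_nonneg_left
        (Real.rpow_le_rpow_of_exponent_ge ht₀ (ht.2.le.trans hε₀) (by linarith)) (by positivity)

theorem norm_le_mul_rpow_of_norm_le_mul_rpow (hε₀ : ε₀ ≤ 1) (hγ₁ : γ₁ ∈ Icc 0 1)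
    (hc₁ : 0 ≤ c₁) (hf : ∀ ε ∈ Ioc 0 ε₀, HasDerivAt f (f' ε) ε)
    (hf' : ∀ ε ∈ Ioo 0 ε₀, ‖f' ε‖ ≤ c₁ * ε ^ (-γ₂) * (1 + ‖f ε‖ ^ γ₁))
    {δ r M K a a' : ℝ} (hδ : 0 < δ) (hγ₂δ : γ₂ + 2 * δ ≤ 1) (hr : 0 < r) (hrε₀ : r < ε₀)
    (hM : ∀ t ∈ Ico r ε₀, ‖f t‖ ≤ M) (hK : 1 ≤ K) (ha : 0 ≤ a)
    (hfK : ∀ t ∈ Ioo 0 ε₀, ‖f t‖ ≤ K * t ^ (-a)) (hδa' : δ ≤ a') (haa' : a - δ ≤ a') :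
    ∀ t ∈ Ioo 0 ε₀, ‖f t‖ ≤ (M + 2 * c₁ / δ + 1) * K * t ^ (-a') := by
  intro t ht
  have ht₀ : 0 < t := ht.1
  have hM₀ : 0 ≤ M := (norm_nonneg _).trans (hM r ⟨le_rfl, hrε₀⟩)
  have hK₀ : 0 ≤ K := zero_le_one.trans hK
  have hKT : 1 ≤ K * t ^ (-a') := one_le_mul_of_one_le_of_one_le hK
    (Real.one_le_rpow_of_pos_of_le_one_of_nonpos ht.1 (ht.2.le.trans hε₀) (by linarith))
  suffices ‖f t‖ ≤ M + 2 * c₁ / δ * (K * t ^ (-a')) by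
    have : 0 ≤ 2 * c₁ / δ := by positivity
    nlinarith
  rcases lt_or_ge t r with htr | hrt
  · have hγ₁a : γ₁ * a ≤ a := mul_le_of_le_one_left ha hγ₁.2
    have hdiff := norm_sub_le_of_norm_le_mul_rpow hε₀ hγ₁ hc₁ hf hf' hK ha hfK
      (s := -a') (by linarith) (by linarith) ht.1 htr.le hrε₀
    rw [norm_sub_rev, div_neg, neg_div', ← mul_neg, neg_sub] at hdiff
    calc ‖f t‖ ≤ ‖f r‖ + ‖f t - f r‖ := norm_le_norm_add_norm_sub' _ _
      _ ≤ M + 2 * c₁ * K * (t ^ (-a') - r ^ (-a')) / a' :=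
          add_le_add (hM r ⟨le_rfl, hrε₀⟩) hdiff
      _ ≤ M + 2 * c₁ * K * t ^ (-a') / a' := by
          gcongr
          · linarith
          · exact sub_le_self _ (Real.rpow_nonneg hr.le _)
      _ ≤ M + 2 * c₁ * K * t ^ (-a') / δ := by gcongr
      _ = M + 2 * c₁ / δ * (K * t ^ (-a')) := by ring
  · have : 0 ≤ 2 * c₁ / δ * (K * t ^ (-a')) := by positivity
    linarith [hM t ⟨hrt, ht.2⟩]

theorem norm_le_pow_mul_rpow_max (hε₀ : ε₀ ≤ 1) (hγ₁ : γ₁ ∈ Icc 0 1) (hc₁ : 0 ≤ c₁)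
    (hf : ∀ ε ∈ Ioc 0 ε₀, HasDerivAt f (f' ε) ε)
    (hf' : ∀ ε ∈ Ioo 0 ε₀, ‖f' ε‖ ≤ c₁ * ε ^ (-γ₂) * (1 + ‖f ε‖ ^ γ₁))
    {δ r M K₀ A : ℝ} (hδ : 0 < δ) (hγ₂δ : γ₂ + 2 * δ ≤ 1) (hr : 0 < r) (hrε₀ : r < ε₀)
    (hM : ∀ t ∈ Ico r ε₀, ‖f t‖ ≤ M) (hK₀ : 1 ≤ K₀)
    (hfA : ∀ t ∈ Ioo 0 ε₀, ‖f t‖ ≤ K₀ * t ^ (-A)) (n : ℕ) :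
    ∀ t ∈ Ioo 0 ε₀, ‖f t‖ ≤ (M + 2 * c₁ / δ + 1) ^ n * K₀ * t ^ (-max (A - n * δ) δ) := by
  have hΦ : 1 ≤ M + 2 * c₁ / δ + 1 := by
    have hM₀ : 0 ≤ M := (norm_nonneg _).trans (hM r ⟨le_rfl, hrε₀⟩)
    have : 0 ≤ 2 * c₁ / δ := by positivity
    linarith
  induction n with
  | zero =>
    intro t ht
    calc ‖f t‖ ≤ K₀ * t ^ (-A) := hfA t ht
      _ ≤ K₀ * t ^ (-max A δ) := mul_le_mul_of_nonneg_left
        (Real.rpow_le_rpow_of_exponent_ge ht.1 (ht.2.le.trans hε₀) (neg_le_neg (le_max_left A δ)))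
        (by linarith)
      _ = _ := by simp
  | succ n ih =>
    have hstep := norm_le_mul_rpow_of_norm_le_mul_rpow hε₀ hγ₁ hc₁ hf hf' hδ hγ₂δ hr hrε₀ hM
      (one_le_mul_of_one_le_of_one_le (one_le_pow₀ hΦ) hK₀)
      (hδ.le.trans (le_max_right _ _)) ih (a' := max (A - (n + 1 : ℕ) * δ) δ)
      (le_max_right _ _) (by
        push_cast
        rw [← max_sub_sub_right]
        exact max_le_max (by linarith) (by linarith))
    intro t ht
    simpa only [pow_succ, mul_comm, mul_left_comm, mul_assoc] using hstep t ht

theorem norm_le_of_norm_le_mul_rpow (hε₀ : ε₀ ≤ 1) (hγ₁ : γ₁ ∈ Icc 0 1) (hc₁ : 0 ≤ c₁)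
    (hf : ∀ ε ∈ Ioc 0 ε₀, HasDerivAt f (f' ε) ε)
    (hf' : ∀ ε ∈ Ioo 0 ε₀, ‖f' ε‖ ≤ c₁ * ε ^ (-γ₂) * (1 + ‖f ε‖ ^ γ₁))
    {δ r M K₀ A : ℝ} (hδ : 0 < δ) (hγ₂δ : γ₂ + 2 * δ ≤ 1) (hr : 0 < r) (hrε₀ : r < ε₀)
    (hM : ∀ t ∈ Ico r ε₀, ‖f t‖ ≤ M) (hK₀ : 1 ≤ K₀)
    (hfA : ∀ t ∈ Ioo 0 ε₀, ‖f t‖ ≤ K₀ * t ^ (-A)) :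
    ∀ t ∈ Ioo 0 ε₀, ‖f t‖ ≤ M + 2 * c₁ * ((M + 2 * c₁ / δ + 1) ^ ⌈A / δ⌉₊ * K₀) / δ := by
  set K := (M + 2 * c₁ / δ + 1) ^ ⌈A / δ⌉₊ * K₀
  have hfδ : ∀ t ∈ Ioo 0 ε₀, ‖f t‖ ≤ K * t ^ (-δ) := by
    have hA : A - ⌈A / δ⌉₊ * δ ≤ δ := by
      have := (div_le_iff₀ hδ).1 (Nat.le_ceil (A / δ))
      linarith
    simpa only [max_eq_right hA] using
      norm_le_pow_mul_rpow_max hε₀ hγ₁ hc₁ hf hf' hδ hγ₂δ hr hrε₀ hM hK₀ hfA ⌈A / δ⌉₊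
  have hM₀ : 0 ≤ M := (norm_nonneg _).trans (hM r ⟨le_rfl, hrε₀⟩)
  have hK : 1 ≤ K := one_le_mul_of_one_le_of_one_le (one_le_pow₀ (by
    have : 0 ≤ 2 * c₁ / δ := by positivity
    linarith)) hK₀
  intro t ht
  have ht₀ : 0 < t := ht.1
  rcases lt_or_ge t r with htr | hrt
  · have hdiff := norm_sub_le_of_norm_le_mul_rpow hε₀ hγ₁ hc₁ hf hf' hK hδ.le hfδ hδ.ne'
      (by nlinarith [hγ₁.2]) ht.1 htr.le hrε₀
    rw [norm_sub_rev] at hdiff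
    have hrδ : r ^ δ ≤ 1 := Real.rpow_le_one hr.le (hrε₀.le.trans hε₀) hδ.le
    calc ‖f t‖ ≤ ‖f r‖ + ‖f t - f r‖ := norm_le_norm_add_norm_sub' _ _
      _ ≤ M + 2 * c₁ * K * (r ^ δ - t ^ δ) / δ := add_le_add (hM r ⟨le_rfl, hrε₀⟩) hdiff
      _ ≤ M + 2 * c₁ * K * 1 / δ := by
          have : 0 ≤ t ^ δ := by positivity
          gcongr
          linarith
      _ = M + 2 * c₁ * K / δ := by rw [mul_one]
  · have : 0 ≤ 2 * c₁ * K / δ := by positivity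
    linarith [hM t ⟨hrt, ht.2⟩]

theorem exists_tendsto_nhdsGT_zero_of_norm_le [CompleteSpace X] (hε₀₀ : 0 < ε₀) (hε₀ : ε₀ ≤ 1)
    (hγ₁ : γ₁ ∈ Icc 0 1) (hγ₂ : γ₂ < 1) (hc₁ : 0 ≤ c₁)
    (hf : ∀ ε ∈ Ioc 0 ε₀, HasDerivAt f (f' ε) ε)
    (hf' : ∀ ε ∈ Ioo 0 ε₀, ‖f' ε‖ ≤ c₁ * ε ^ (-γ₂) * (1 + ‖f ε‖ ^ γ₁))
    {c : ℝ} (hfc : ∀ t ∈ Ioo 0 ε₀, ‖f t‖ ≤ c) :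
    ∃ L, Tendsto f (𝓝[>] 0) (𝓝 L) := by
  obtain ⟨K, hcK, hK⟩ : ∃ K, c ≤ K ∧ 1 ≤ K := ⟨max c 1, le_max_left c 1, le_max_right c 1⟩
  have hs : 0 < 1 - γ₂ := sub_pos.2 hγ₂
  have hfK : ∀ t ∈ Ioo 0 ε₀, ‖f t‖ ≤ K * t ^ (-0 : ℝ) := fun t ht => by
    simpa using (hfc t ht).trans hcK
  have hdiff : ∀ x ∈ Ioo 0 ε₀, ∀ y ∈ Ioo 0 ε₀, x ≤ y → ‖f y - f x‖ ≤
      2 * c₁ * K * x ^ (1 - γ₂) / (1 - γ₂) + 2 * c₁ * K * y ^ (1 - γ₂) / (1 - γ₂) := by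
    intro x hx y hy hxy
    have hx₀ : 0 < x := hx.1
    have hK₀ : 0 ≤ K := zero_le_one.trans hK
    calc ‖f y - f x‖ ≤ 2 * c₁ * K * (y ^ (1 - γ₂) - x ^ (1 - γ₂)) / (1 - γ₂) :=
          norm_sub_le_of_norm_le_mul_rpow hε₀ hγ₁ hc₁ hf hf' hK le_rfl hfK hs.ne' (by simp)
            hx₀ hxy hy.2
      _ ≤ 2 * c₁ * K * y ^ (1 - γ₂) / (1 - γ₂) := by
          gcongr
          exact sub_le_self _ (by positivity)
      _ ≤ _ := le_add_of_nonneg_left (by positivity)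
  have hφ : Tendsto (fun t => 2 * c₁ * K * t ^ (1 - γ₂) / (1 - γ₂)) (𝓝[>] 0) (𝓝 0) := by
    have := ((Real.continuousAt_rpow_const 0 (1 - γ₂) (Or.inr hs.le)).const_mul
      (2 * c₁ * K)).div_const (1 - γ₂)
    simpa [Real.zero_rpow hs.ne'] using this.tendsto.mono_left nhdsWithin_le_nhds
  refine exists_tendsto_of_dist_le_add hφ ?_
  filter_upwards [prod_mem_prod (Ioo_mem_nhdsGT hε₀₀) (Ioo_mem_nhdsGT hε₀₀)]
    with ⟨x, y⟩ ⟨hx, hy⟩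
  rw [dist_eq_norm]
  rcases le_total x y with hxy | hyx
  · rw [norm_sub_rev]; exact hdiff x hx y hy hxy
  · rw [add_comm]; exact hdiff y hy x hx hyx

end DifferentialInequality

/-- Differential-inequality boundedness lemma (Jensen–Mourre–Perry): if
`f ∈ C¹((0,ε₀], X)` satisfies `‖f'(ε)‖ ≤ c₁ ε^{-γ₂}(1 + ‖f(ε)‖^{γ₁})` and
`‖f(ε)‖ ≤ c₂ ε^{-γ₃}` with `γ₁ ∈ [0,1]`, `γ₂ ∈ [0,1)`, then `f` has a limit at `0`
and is bounded by a constant `c` depending only on `ε₀, γ₁, γ₂, γ₃, c₁, c₂`. -/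
theorem stmt_7 (ε₀ γ₁ γ₂ γ₃ c₁ c₂ : ℝ) (hε₀ : ε₀ ∈ Ioc (0 : ℝ) 1)
    (hγ₁ : γ₁ ∈ Icc (0 : ℝ) 1) (hγ₂ : γ₂ ∈ Ico (0 : ℝ) 1)
    (hc₁ : 0 < c₁) (hc₂ : 0 < c₂) :
    ∃ c : ℝ, 0 ≤ c ∧
      ∀ (X : Type) [NormedAddCommGroup X] [NormedSpace ℝ X] [CompleteSpace X]
        (f f' : ℝ → X),
        (∀ ε ∈ Ioc (0 : ℝ) ε₀, HasDerivAt f (f' ε) ε) →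
        ContinuousOn f' (Ioc (0 : ℝ) ε₀) →
        (∀ ε ∈ Ioo (0 : ℝ) ε₀, ‖f' ε‖ ≤ c₁ * ε ^ (-γ₂) * (1 + ‖f ε‖ ^ γ₁)) →
        (∀ ε ∈ Ioo (0 : ℝ) ε₀, ‖f ε‖ ≤ c₂ * ε ^ (-γ₃)) →
        (∃ L : X, Tendsto f (nhdsWithin 0 (Ioi 0)) (nhds L)) ∧
        ∀ ε ∈ Ioo (0 : ℝ) ε₀, ‖f ε‖ ≤ c := by
  obtain ⟨hε₀₀, hε₀₁⟩ := hε₀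
  obtain ⟨δ, hδ, hγ₂δ⟩ : ∃ δ, 0 < δ ∧ γ₂ + 2 * δ ≤ 1 :=
    ⟨(1 - γ₂) / 2, by linarith [hγ₂.2], by linarith⟩
  obtain ⟨r, hr, hrε₀⟩ := exists_between hε₀₀
  obtain ⟨M, hM₀, hM⟩ : ∃ M, 0 ≤ M ∧ ∀ t ∈ Ico r ε₀, c₂ * t ^ (-γ₃) ≤ M :=
    ⟨c₂ * r ^ (-|γ₃|), by positivity, fun t ht => mul_le_mul_of_nonneg_left
      (rpow_neg_le_rpow_neg_abs_of_le hr ht.1 (ht.2.le.trans hε₀₁)) hc₂.le⟩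
  refine ⟨M + 2 * c₁ * ((M + 2 * c₁ / δ + 1) ^ ⌈γ₃ / δ⌉₊ * max c₂ 1) / δ, by positivity,
    fun X _ _ _ f f' hf _ hf' hfγ₃ => ?_⟩
  have hbound := norm_le_of_norm_le_mul_rpow hε₀₁ hγ₁ hc₁.le hf hf' hδ hγ₂δ hr hrε₀
    (fun t ht => (hfγ₃ t ⟨hr.trans_le ht.1, ht.2⟩).trans (hM t ht)) (le_max_right _ _)
    (fun t ht => (hfγ₃ t ht).trans
      (mul_le_mul_of_nonneg_right (le_max_left _ _) (Real.rpow_nonneg ht.1.le _)))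
  exact ⟨exists_tendsto_nhdsGT_zero_of_norm_le hε₀₀ hε₀₁ hγ₁ hγ₂.2 hc₁.le hf hf' hbound, hbound⟩
end
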